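/- Let R be a category, W a multiplicative class of morphisms of R with associated wide subcategory 𝒲, and x, y objects of R. Let m and m′ be zigzag words of lengths p and q respectively. Then the square of categories and functors whose top-left corner is (m ++ m′)(x, y), whose top map (m ++ m′)(x, y) ⥤ Fun_t(m′, R; y) is restriction along ι′ : Z(m′) ⥤ Z(m ++ m′), whose left map (m ++ m′)(x, y) ⥤ Fun_s(m, R; x) is restriction along ι : Z(m) ⥤ Z(m ++ m′), whose right map Fun_t(m′, R; y) ⥤ 𝒲 is evaluation at the vertex 0 of Z(m′), and whose bottom map Fun_s(m, R; x) ⥤ 𝒲 is evaluation at the vertex p of Z(m), commutes and is a pullback square in the category Cat of categories (CategoryTheory.IsPullback). That is, the category of zigzags of concatenated type [m; m′] from x to y is the fiber product over 𝒲 of the two half-pointed zigzag categories. -/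

import Mathlib

open CategoryTheory

/-- The two symbols of which zigzag words are composed: `A` ("any arbitrary arrow") and
`W` ("backward weak equivalence"). -/
inductive ZigSym : Type
  | A : ZigSym
  | W : ZigSym
  deriving DecidableEq

/-- A zigzag word is a list of symbols. -/
abbrev ZigzagWord : Type := List ZigSym

/-- The vertices of the zigzag quiver of a word `m`: `0, 1, …, m.length`. -/
def ZigVert (m : ZigzagWord) : Type := Fin (m.length + 1)

/-- A vertex of the zigzag quiver. -/
def ZigVert.mk (m : ZigzagWord) (k : Fin (m.length + 1)) : ZigVert m := k

/-- The underlying natural number of a vertex. -/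
def ZigVert.toNat {m : ZigzagWord} (a : ZigVert m) : ℕ :=
  (show Fin (m.length + 1) from a).val

/-- There is exactly one arrow `(k-1) ⟶ k` for each `k` with `t k = A`, and exactly one
arrow `k ⟶ (k-1)` for each `k` with `t k = W` (in `1`-indexed notation). -/
def ZigHomP (m : ZigzagWord) (a b : ZigVert m) : Prop :=
  ∃ (k : ℕ) (hk : k < m.length),
    (m[k]'hk = ZigSym.A ∧ a.toNat = k ∧ b.toNat = k + 1) ∨
    (m[k]'hk = ZigSym.W ∧ a.toNat = k + 1 ∧ b.toNat = k)

instance (m : ZigzagWord) : Quiver.{0} (ZigVert m) :=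
  ⟨fun a b => PLift (ZigHomP m a b)⟩

/-- The zigzag category `Z(m)` of a zigzag word `m`: the free category on the zigzag
quiver of `m`. -/
abbrev ZigCat (m : ZigzagWord) : Type := Paths (ZigVert m)

/-- The vertex `0` (the source). -/
def zigSource (m : ZigzagWord) : ZigVert m := ZigVert.mk m 0

/-- The vertex `p = m.length` (the target). -/
def zigTarget (m : ZigzagWord) : ZigVert m := ZigVert.mk m (Fin.last m.length)

/-- The prefunctor `ZigVert m ⥤q ZigVert (m ++ m')` induced by the vertex map `k ↦ k`. -/
def zigIncl₁Prefunctor (m m' : ZigzagWord) : ZigVert m ⥤q ZigVert (m ++ m') where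
  obj a := ZigVert.mk _ ⟨a.toNat, by
    have : a.toNat < m.length + 1 := (show Fin (m.length + 1) from a).isLt
    simp only [List.length_append]
    omega⟩
  map {a b} e := PLift.up (by
    obtain ⟨k, hk, h⟩ := e.down
    refine ⟨k, by simp only [List.length_append]; omega, ?_⟩
    have hget : (m ++ m')[k]'(by simp only [List.length_append]; omega) = m[k]'hk :=
      List.getElem_append_left hk
    rcases h with ⟨hA, ha, hb⟩ | ⟨hW, ha, hb⟩
    · exact Or.inl ⟨hget.trans hA, by simpa [ZigVert.toNat, ZigVert.mk] using ha,
        by simpa [ZigVert.toNat, ZigVert.mk] using hb⟩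
    · exact Or.inr ⟨hget.trans hW, by simpa [ZigVert.toNat, ZigVert.mk] using ha,
        by simpa [ZigVert.toNat, ZigVert.mk] using hb⟩)

/-- The prefunctor `ZigVert m' ⥤q ZigVert (m ++ m')` induced by the vertex map
`k ↦ m.length + k`. -/
def zigIncl₂Prefunctor (m m' : ZigzagWord) : ZigVert m' ⥤q ZigVert (m ++ m') where
  obj a := ZigVert.mk _ ⟨m.length + a.toNat, by
    have : a.toNat < m'.length + 1 := (show Fin (m'.length + 1) from a).isLt
    simp only [List.length_append]
    omega⟩
  map {a b} e := PLift.up (by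
    obtain ⟨k, hk, h⟩ := e.down
    refine ⟨m.length + k, by simp only [List.length_append]; omega, ?_⟩
    have hget : (m ++ m')[m.length + k]'(by simp only [List.length_append]; omega) =
        m'[k]'hk := by
      have := List.getElem_append_right (as := m) (bs := m') (i := m.length + k)
        (Nat.le_add_right _ _) (h₂ := by simp only [List.length_append]; omega)
      simpa using this
    rcases h with ⟨hA, ha, hb⟩ | ⟨hW, ha, hb⟩
    · exact Or.inl ⟨hget.trans hA, by simp [ZigVert.toNat, ZigVert.mk] at ha ⊢; omega,
        by simp [ZigVert.toNat, ZigVert.mk] at hb ⊢; omega⟩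
    · exact Or.inr ⟨hget.trans hW, by simp [ZigVert.toNat, ZigVert.mk] at ha ⊢; omega,
        by simp [ZigVert.toNat, ZigVert.mk] at hb ⊢; omega⟩)

/-- The functor `ι : Z(m) ⥤ Z(m ++ m')` induced by the vertex map `k ↦ k`. -/
def zigIncl₁ (m m' : ZigzagWord) : ZigCat m ⥤ ZigCat (m ++ m') :=
  Paths.lift ((zigIncl₁Prefunctor m m').comp (Paths.of _))

/-- The functor `ι' : Z(m') ⥤ Z(m ++ m')` induced by the vertex map `k ↦ m.length + k`. -/
def zigIncl₂ (m m' : ZigzagWord) : ZigCat m' ⥤ ZigCat (m ++ m') :=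
  Paths.lift ((zigIncl₂Prefunctor m m').comp (Paths.of _))

universe v u

variable {R : Type u} [Category.{v} R]

/-- The generating arrow `e : a ⟶ b` is one of the backward ("weak equivalence") arrows
`k ⟶ (k-1)` corresponding to a letter `W` of the word `m`. -/
def IsWArrow (m : ZigzagWord) {a b : ZigVert m} (_ : a ⟶ b) : Prop :=
  ∃ (k : ℕ) (hk : k < m.length),
    m[k]'hk = ZigSym.W ∧ a.toNat = k + 1 ∧ b.toNat = k

/-- A functor `T : Z(m) ⥤ R` is a relative functor of type `m` if it sends each generating
arrow corresponding to a letter `W` of `m` to a morphism lying in `W`. -/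
def IsRelFunctor (m : ZigzagWord) (W : MorphismProperty R) (T : ZigCat m ⥤ R) : Prop :=
  ∀ ⦃a b : ZigVert m⦄ (e : a ⟶ b), IsWArrow m e → W (T.map ((Paths.of _).map e))

/-- The wide subcategory `𝒲` of `R` associated to a multiplicative class `W` of morphisms:
same objects, and morphisms those of `R` lying in `W`. -/
def WideSub (W : MorphismProperty R) : Type u := R

/-- An object of `R`, seen in the wide subcategory. -/
def WideSub.mk (W : MorphismProperty R) (r : R) : WideSub W := r

instance (W : MorphismProperty R) [W.IsMultiplicative] : Category.{v} (WideSub W) where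
  Hom a b := { f : (show R from a) ⟶ (show R from b) // W f }
  id a := ⟨𝟙 _, W.id_mem _⟩
  comp f g := ⟨f.1 ≫ g.1, W.comp_mem _ _ f.2 g.2⟩
  id_comp f := Subtype.ext (Category.id_comp f.1)
  comp_id f := Subtype.ext (Category.comp_id f.1)
  assoc f g h := Subtype.ext (Category.assoc f.1 g.1 h.1)

/-- The category `Fun_s(m, R; x)`: objects are the relative functors `T` of type `m` with
`T(0) = x`. -/
structure FunS (m : ZigzagWord) (W : MorphismProperty R) (x : R) : Type max u v where
  T : ZigCat m ⥤ R
  rel : IsRelFunctor m W T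
  hx : T.obj ((Paths.of _).obj (zigSource m)) = x

/-- Morphisms of `Fun_s(m, R; x)`: natural transformations all of whose components lie in
`W` and whose component at the vertex `0` is the identity of `x`. -/
structure FunS.Hom {m : ZigzagWord} {W : MorphismProperty R} {x : R}
    (X Y : FunS m W x) : Type v where
  η : X.T ⟶ Y.T
  mem : ∀ v : ZigCat m, W (η.app v)
  h₀ : η.app ((Paths.of _).obj (zigSource m)) = eqToHom (X.hx.trans Y.hx.symm)

theorem FunS.Hom.ext' {m : ZigzagWord} {W : MorphismProperty R} {x : R} {X Y : FunS m W x}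
    {f g : FunS.Hom X Y} (h : f.η = g.η) : f = g := by
  cases f; cases g; cases h; rfl

instance {m : ZigzagWord} (W : MorphismProperty R) [W.IsMultiplicative] (x : R) :
    Category.{v} (FunS m W x) where
  Hom X Y := FunS.Hom X Y
  id X := { η := 𝟙 X.T, mem := fun v => W.id_mem _, h₀ := by simp }
  comp f g :=
    { η := f.η ≫ g.η
      mem := fun v => W.comp_mem _ _ (f.mem v) (g.mem v)
      h₀ := by rw [NatTrans.comp_app, f.h₀, g.h₀, eqToHom_trans] }
  id_comp f := FunS.Hom.ext' (by simp)
  comp_id f := FunS.Hom.ext' (by simp)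
  assoc f g h := FunS.Hom.ext' (by simp)

/-- The category `Fun_t(m, R; y)`: objects are the relative functors `T` of type `m` with
`T(p) = y`. -/
structure FunT (m : ZigzagWord) (W : MorphismProperty R) (y : R) : Type max u v where
  T : ZigCat m ⥤ R
  rel : IsRelFunctor m W T
  hy : T.obj ((Paths.of _).obj (zigTarget m)) = y

/-- Morphisms of `Fun_t(m, R; y)`: natural transformations all of whose components lie in
`W` and whose component at the vertex `p` is the identity of `y`. -/
structure FunT.Hom {m : ZigzagWord} {W : MorphismProperty R} {y : R}
    (X Y : FunT m W y) : Type v where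
  η : X.T ⟶ Y.T
  mem : ∀ v : ZigCat m, W (η.app v)
  hₚ : η.app ((Paths.of _).obj (zigTarget m)) = eqToHom (X.hy.trans Y.hy.symm)

theorem FunT.Hom.ext' {m : ZigzagWord} {W : MorphismProperty R} {y : R} {X Y : FunT m W y}
    {f g : FunT.Hom X Y} (h : f.η = g.η) : f = g := by
  cases f; cases g; cases h; rfl

instance {m : ZigzagWord} (W : MorphismProperty R) [W.IsMultiplicative] (y : R) :
    Category.{v} (FunT m W y) where
  Hom X Y := FunT.Hom X Y
  id X := { η := 𝟙 X.T, mem := fun v => W.id_mem _, hₚ := by simp }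
  comp f g :=
    { η := f.η ≫ g.η
      mem := fun v => W.comp_mem _ _ (f.mem v) (g.mem v)
      hₚ := by rw [NatTrans.comp_app, f.hₚ, g.hₚ, eqToHom_trans] }
  id_comp f := FunT.Hom.ext' (by simp)
  comp_id f := FunT.Hom.ext' (by simp)
  assoc f g h := FunT.Hom.ext' (by simp)

/-- Evaluation at the vertex `p` on `Fun_s(m, R; x)`, as a functor to the wide
subcategory `𝒲`. -/
def evalTarget (m : ZigzagWord) (W : MorphismProperty R) [W.IsMultiplicative] (x : R) :
    FunS m W x ⥤ WideSub W where
  obj X := WideSub.mk W (X.T.obj ((Paths.of _).obj (zigTarget m)))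
  map f := ⟨f.η.app ((Paths.of _).obj (zigTarget m)), f.mem _⟩
  map_id X := rfl
  map_comp f g := rfl

/-- Evaluation at the vertex `0` on `Fun_t(m, R; y)`, as a functor to the wide
subcategory `𝒲`. -/
def evalSource (m : ZigzagWord) (W : MorphismProperty R) [W.IsMultiplicative] (y : R) :
    FunT m W y ⥤ WideSub W where
  obj X := WideSub.mk W (X.T.obj ((Paths.of _).obj (zigSource m)))
  map f := ⟨f.η.app ((Paths.of _).obj (zigSource m)), f.mem _⟩
  map_id X := rfl
  map_comp f g := rfl

/-- The category `m(x, y)` of zigzags of type `m` from `x` to `y`: objects are the relative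
functors `T` of type `m` with `T(0) = x` and `T(p) = y`. -/
structure ZigBoth (m : ZigzagWord) (W : MorphismProperty R) (x y : R) : Type max u v where
  T : ZigCat m ⥤ R
  rel : IsRelFunctor m W T
  hx : T.obj ((Paths.of _).obj (zigSource m)) = x
  hy : T.obj ((Paths.of _).obj (zigTarget m)) = y

/-- Morphisms of `m(x, y)`: natural transformations all of whose components lie in `W` and
whose components at the vertices `0` and `p` are the identities of `x` and `y`. -/
structure ZigBoth.Hom {m : ZigzagWord} {W : MorphismProperty R} {x y : R}
    (X Y : ZigBoth m W x y) : Type v where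
  η : X.T ⟶ Y.T
  mem : ∀ v : ZigCat m, W (η.app v)
  h₀ : η.app ((Paths.of _).obj (zigSource m)) = eqToHom (X.hx.trans Y.hx.symm)
  hₚ : η.app ((Paths.of _).obj (zigTarget m)) = eqToHom (X.hy.trans Y.hy.symm)

theorem ZigBoth.Hom.ext' {m : ZigzagWord} {W : MorphismProperty R} {x y : R}
    {X Y : ZigBoth m W x y} {f g : ZigBoth.Hom X Y} (h : f.η = g.η) : f = g := by
  cases f; cases g; cases h; rfl

instance {m : ZigzagWord} (W : MorphismProperty R) [W.IsMultiplicative] (x y : R) :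
    Category.{v} (ZigBoth m W x y) where
  Hom X Y := ZigBoth.Hom X Y
  id X := { η := 𝟙 X.T, mem := fun v => W.id_mem _, h₀ := by simp, hₚ := by simp }
  comp f g :=
    { η := f.η ≫ g.η
      mem := fun v => W.comp_mem _ _ (f.mem v) (g.mem v)
      h₀ := by rw [NatTrans.comp_app, f.h₀, g.h₀, eqToHom_trans]
      hₚ := by rw [NatTrans.comp_app, f.hₚ, g.hₚ, eqToHom_trans] }
  id_comp f := ZigBoth.Hom.ext' (by simp)
  comp_id f := ZigBoth.Hom.ext' (by simp)
  assoc f g h := ZigBoth.Hom.ext' (by simp)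

/-- Auxiliary transport lemma for components of natural transformations. -/
theorem app_eq_eqToHom_of {C : Type*} {D : Type*} [Category C] [Category D]
    {F G : C ⥤ D} (η : F ⟶ G) {v w : C} (h : w = v)
    (p : F.obj w = G.obj w) (happ : η.app w = eqToHom p)
    (q : F.obj v = G.obj v) : η.app v = eqToHom q := by
  subst h; exact happ

/-- Restriction along `ι : Z(m) ⥤ Z(m ++ m')`, as a functor
`(m ++ m')(x, y) ⥤ Fun_s(m, R; x)`. -/
def restrictLeft (W : MorphismProperty R) [W.IsMultiplicative] (x y : R)
    (m m' : ZigzagWord) : ZigBoth (m ++ m') W x y ⥤ FunS m W x where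
  obj X :=
    { T := zigIncl₁ m m' ⋙ X.T
      rel := by
        intro a b e he
        obtain ⟨k, hk, hW, ha, hb⟩ := he
        have hmap : (zigIncl₁ m m').map ((Paths.of _).map e) =
            (Paths.of _).map ((zigIncl₁Prefunctor m m').map e) := by
          exact Paths.lift_toPath _ _
        rw [Functor.comp_map, hmap]
        refine X.rel _ ⟨k, by simp only [List.length_append]; omega, ?_, ?_, ?_⟩
        · exact (List.getElem_append_left hk).trans hW
        · simpa [zigIncl₁Prefunctor, ZigVert.mk, ZigVert.toNat] using ha
        · simpa [zigIncl₁Prefunctor, ZigVert.mk, ZigVert.toNat] using hb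
      hx := by
        have h : (zigIncl₁ m m').obj ((Paths.of _).obj (zigSource m)) =
            (Paths.of _).obj (zigSource (m ++ m')) :=
          Fin.ext (by simp [zigSource, ZigVert.mk, ZigVert.toNat, zigIncl₁,
            zigIncl₁Prefunctor, Paths.lift, Paths.of]; rfl)
        show X.T.obj ((zigIncl₁ m m').obj ((Paths.of _).obj (zigSource m))) = x
        rw [h, X.hx] }
  map {X Y} f :=
    { η := Functor.whiskerLeft (zigIncl₁ m m') f.η
      mem := fun v => f.mem _
      h₀ := by
        have h : (zigIncl₁ m m').obj ((Paths.of _).obj (zigSource m)) =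
            (Paths.of _).obj (zigSource (m ++ m')) :=
          Fin.ext (by simp [zigSource, ZigVert.mk, ZigVert.toNat, zigIncl₁,
            zigIncl₁Prefunctor, Paths.lift, Paths.of]; rfl)
        exact app_eq_eqToHom_of f.η h.symm _ f.h₀ _ }
  map_id X := FunS.Hom.ext' rfl
  map_comp f g := FunS.Hom.ext' rfl

/-- Restriction along `ι' : Z(m') ⥤ Z(m ++ m')`, as a functor
`(m ++ m')(x, y) ⥤ Fun_t(m', R; y)`. -/
def restrictRight (W : MorphismProperty R) [W.IsMultiplicative] (x y : R)
    (m m' : ZigzagWord) : ZigBoth (m ++ m') W x y ⥤ FunT m' W y where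
  obj X :=
    { T := zigIncl₂ m m' ⋙ X.T
      rel := by
        intro a b e he
        obtain ⟨k, hk, hW, ha, hb⟩ := he
        have hmap : (zigIncl₂ m m').map ((Paths.of _).map e) =
            (Paths.of _).map ((zigIncl₂Prefunctor m m').map e) := by
          exact Paths.lift_toPath _ _
        rw [Functor.comp_map, hmap]
        refine X.rel _ ⟨m.length + k, by simp only [List.length_append]; omega, ?_, ?_, ?_⟩
        · refine Eq.trans ?_ hW
          have := List.getElem_append_right (as := m) (bs := m') (i := m.length + k)
            (Nat.le_add_right _ _) (h₂ := by simp only [List.length_append]; omega)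
          simpa using this
        · simp only [zigIncl₂Prefunctor, ZigVert.mk, ZigVert.toNat] at ha ⊢; omega
        · simp only [zigIncl₂Prefunctor, ZigVert.mk, ZigVert.toNat] at hb ⊢; omega
      hy := by
        have h : (zigIncl₂ m m').obj ((Paths.of _).obj (zigTarget m')) =
            (Paths.of _).obj (zigTarget (m ++ m')) :=
          Fin.ext (by simp [zigTarget, ZigVert.mk, ZigVert.toNat, zigIncl₂,
            zigIncl₂Prefunctor, Paths.lift, Paths.of, Fin.last, List.length_append]; rfl)
        show X.T.obj ((zigIncl₂ m m').obj ((Paths.of _).obj (zigTarget m'))) = y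
        rw [h, X.hy] }
  map {X Y} f :=
    { η := Functor.whiskerLeft (zigIncl₂ m m') f.η
      mem := fun v => f.mem _
      hₚ := by
        have h : (zigIncl₂ m m').obj ((Paths.of _).obj (zigTarget m')) =
            (Paths.of _).obj (zigTarget (m ++ m')) :=
          Fin.ext (by simp [zigTarget, ZigVert.mk, ZigVert.toNat, zigIncl₂,
            zigIncl₂Prefunctor, Paths.lift, Paths.of, Fin.last, List.length_append]; rfl)
        exact app_eq_eqToHom_of f.η h.symm _ f.hₚ _ }
  map_id X := FunT.Hom.ext' rfl
  map_comp f g := FunT.Hom.ext' rfl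


/-!
Every vertex and every generating arrow of `Z(m ++ m')` lies in the image of `ι` or of `ι'`,
and the two images meet only in the junction vertex `ι p = ι' 0`. Hence a relative functor of type
`m ++ m'` is the same as a pair of relative functors of types `m` and `m'` with the same value
at the junction, glued along it; likewise a natural transformation is a pair of natural
transformations with the same component at the junction. The endpoint conditions at `0` and
`p + q` only involve one half each, so `(m ++ m')(x, y)` is the strict fibre product of
`Fun_s(m, R; x)` and `Fun_t(m', R; y)` over `𝒲`, which is the pullback in `Cat`.
-/

namespace CategoryTheory

theorem Functor.ext_of_comp_eq {A B C₁ C₂ : Type*} [Category A] [Category B] [Category C₁]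
    [Category C₂] (G₁ : B ⥤ C₁) (G₂ : B ⥤ C₂)
    (hobj : ∀ X Y : B, G₁.obj X = G₁.obj Y → G₂.obj X = G₂.obj Y → X = Y)
    (hmap : ∀ {X Y : B} (f g : X ⟶ Y), G₁.map f = G₁.map g → G₂.map f = G₂.map g → f = g)
    {M M' : A ⥤ B} (h₁ : M ⋙ G₁ = M' ⋙ G₁) (h₂ : M ⋙ G₂ = M' ⋙ G₂) : M = M' := by
  refine Functor.ext (fun c => hobj _ _ (Functor.congr_obj h₁ c) (Functor.congr_obj h₂ c))
    fun c c' φ => hmap _ _ ?_ ?_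
  · simpa [eqToHom_map] using Functor.congr_hom h₁ φ
  · simpa [eqToHom_map] using Functor.congr_hom h₂ φ

theorem MorphismProperty.eqToHom_comp_comp_eqToHom_mem {C : Type*} [Category C]
    (W : MorphismProperty C) [W.IsMultiplicative] {X X' Y Y' : C} {f : X ⟶ Y} (hf : W f)
    (hX : X' = X) (hY : Y = Y') : W (eqToHom hX ≫ f ≫ eqToHom hY) := by
  subst hX hY
  simpa using hf

theorem Paths.map_of_map_heq {V C : Type*} [Quiver V] [∀ a b : V, Subsingleton (a ⟶ b)]
    [Category C] (F : Paths V ⥤ C) {a b a' b' : V} (e : a ⟶ b) (e' : a' ⟶ b') (ha : a = a')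
    (hb : b = b') : F.map ((Paths.of V).map e) ≍ F.map ((Paths.of V).map e') := by
  subst ha hb
  rw [Subsingleton.elim e e']

theorem Paths.ext_functor_of_heq {V C : Type*} [Quiver V] [Category C] {F G : Paths V ⥤ C}
    (h_obj : F.obj = G.obj)
    (h : ∀ (a b : V) (e : a ⟶ b), F.map ((Paths.of V).map e) ≍ G.map ((Paths.of V).map e)) :
    F = G :=
  Paths.ext_functor h_obj fun a b e =>
    (conj_eqToHom_iff_heq _ _ (congr_fun h_obj a) (congr_fun h_obj b)).2 (h a b e)

end CategoryTheory

instance (m : ZigzagWord) (a b : ZigVert m) : Subsingleton (a ⟶ b) :=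
  inferInstanceAs (Subsingleton (PLift _))

namespace ZigVert

variable {m m' : ZigzagWord}

@[ext]
theorem ext {v w : ZigVert m} (h : v.toNat = w.toNat) : v = w :=
  Fin.ext h

theorem toNat_le (v : ZigVert m) : v.toNat ≤ m.length :=
  Nat.lt_succ_iff.mp (show Fin (m.length + 1) from v).isLt

theorem toNat_lt_append (v : ZigVert (m ++ m')) : v.toNat < m.length + m'.length + 1 := by
  simpa [ZigVert.toNat] using (show Fin ((m ++ m').length + 1) from v).isLt

theorem toNat_ne {a b : ZigVert m} (e : a ⟶ b) : a.toNat ≠ b.toNat := by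
  obtain ⟨k, -, ⟨-, ha, hb⟩ | ⟨-, ha, hb⟩⟩ := e.down <;> omega

@[simp]
theorem toNat_zigSource : (zigSource m).toNat = 0 := rfl

@[simp]
theorem toNat_zigTarget : (zigTarget m).toNat = m.length := rfl

@[simp]
theorem toNat_zigIncl₁ (v : ZigVert m) : ((zigIncl₁Prefunctor m m').obj v).toNat = v.toNat :=
  rfl

@[simp]
theorem toNat_zigIncl₂ (v : ZigVert m') :
    ((zigIncl₂Prefunctor m m').obj v).toNat = m.length + v.toNat :=
  rfl

def toLeft (v : ZigVert (m ++ m')) (h : v.toNat ≤ m.length) : ZigVert m :=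
  ZigVert.mk m ⟨v.toNat, by omega⟩

def toRight (v : ZigVert (m ++ m')) (_ : m.length ≤ v.toNat) : ZigVert m' :=
  ZigVert.mk m' ⟨v.toNat - m.length, by have := v.toNat_lt_append; omega⟩

@[simp]
theorem toNat_toLeft (v : ZigVert (m ++ m')) (h : v.toNat ≤ m.length) :
    (v.toLeft h).toNat = v.toNat := rfl

@[simp]
theorem toNat_toRight (v : ZigVert (m ++ m')) (h : m.length ≤ v.toNat) :
    (v.toRight h).toNat = v.toNat - m.length := rfl

theorem zigIncl₁_toLeft (v : ZigVert (m ++ m')) (h : v.toNat ≤ m.length) :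
    (zigIncl₁Prefunctor m m').obj (v.toLeft h) = v := rfl

theorem zigIncl₂_toRight (v : ZigVert (m ++ m')) (h : m.length ≤ v.toNat) :
    (zigIncl₂Prefunctor m m').obj (v.toRight h) = v := by
  ext
  simp only [toNat_zigIncl₂, toNat_toRight]
  omega

theorem toRight_zigIncl₂ (v : ZigVert m')
    (h : m.length ≤ ((zigIncl₂Prefunctor m m').obj v).toNat) :
    ((zigIncl₂Prefunctor m m').obj v).toRight h = v := by
  ext
  simp

theorem zigIncl₂_zigSource :
    (zigIncl₂Prefunctor m m').obj (zigSource m') = (zigIncl₁Prefunctor m m').obj (zigTarget m) := by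
  ext
  simp

theorem zigIncl₁_zigSource : (zigIncl₁Prefunctor m m').obj (zigSource m) = zigSource (m ++ m') := by
  ext
  simp

theorem zigIncl₂_zigTarget :
    (zigIncl₂Prefunctor m m').obj (zigTarget m') = zigTarget (m ++ m') := by
  ext
  simp

theorem exists_zigIncl (v : ZigVert (m ++ m')) :
    (∃ a, (zigIncl₁Prefunctor m m').obj a = v) ∨ ∃ b, (zigIncl₂Prefunctor m m').obj b = v := by
  rcases le_total v.toNat m.length with h | h
  · exact .inl ⟨_, zigIncl₁_toLeft v h⟩
  · exact .inr ⟨_, zigIncl₂_toRight v h⟩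

variable {a b : ZigVert (m ++ m')}

theorem hom_side (e : a ⟶ b) :
    (a.toNat ≤ m.length ∧ b.toNat ≤ m.length) ∨ (m.length ≤ a.toNat ∧ m.length ≤ b.toNat) := by
  obtain ⟨k, -, ⟨-, ha, hb⟩ | ⟨-, ha, hb⟩⟩ := e.down <;> omega

def homLeft (e : a ⟶ b) (ha : a.toNat ≤ m.length) (hb : b.toNat ≤ m.length) :
    a.toLeft ha ⟶ b.toLeft hb :=
  ⟨by
    obtain ⟨k, _, h⟩ := e.down
    have hk : k < m.length := by rcases h with ⟨-, _, _⟩ | ⟨-, _, _⟩ <;> omega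
    rw [List.getElem_append_left hk] at h
    exact ⟨k, hk, h⟩⟩

def homRight (e : a ⟶ b) (ha : m.length ≤ a.toNat) (hb : m.length ≤ b.toNat) :
    a.toRight ha ⟶ b.toRight hb :=
  ⟨by
    obtain ⟨k, hk, h⟩ := e.down
    have hpk : m.length ≤ k := by rcases h with ⟨-, _, _⟩ | ⟨-, _, _⟩ <;> omega
    rw [List.getElem_append_right hpk] at h
    refine ⟨k - m.length, by simp only [List.length_append] at hk; omega, ?_⟩
    simp only [toNat_toRight]
    rcases h with ⟨h, _, _⟩ | ⟨h, _, _⟩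
    · exact .inl ⟨h, by omega, by omega⟩
    · exact .inr ⟨h, by omega, by omega⟩⟩

theorem isWArrow_homLeft {e : a ⟶ b} (he : IsWArrow (m ++ m') e) (ha : a.toNat ≤ m.length)
    (hb : b.toNat ≤ m.length) : IsWArrow m (homLeft e ha hb) := by
  obtain ⟨k, _, h, hak, hbk⟩ := he
  have hk : k < m.length := by omega
  rw [List.getElem_append_left hk] at h
  exact ⟨k, hk, h, hak, hbk⟩

theorem isWArrow_homRight {e : a ⟶ b} (he : IsWArrow (m ++ m') e) (ha : m.length ≤ a.toNat)
    (hb : m.length ≤ b.toNat) : IsWArrow m' (homRight e ha hb) := by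
  obtain ⟨k, hk, h, hak, hbk⟩ := he
  have hpk : m.length ≤ k := by omega
  rw [List.getElem_append_right hpk] at h
  simp only [List.length_append] at hk
  exact ⟨k - m.length, by omega, h, by simp only [toNat_toRight]; omega,
    by simp only [toNat_toRight]; omega⟩

theorem hom_cases (e : a ⟶ b) :
    (∃ (a' b' : ZigVert m) (_ : a' ⟶ b'),
      (zigIncl₁Prefunctor m m').obj a' = a ∧ (zigIncl₁Prefunctor m m').obj b' = b) ∨
    (∃ (a' b' : ZigVert m') (_ : a' ⟶ b'),
      (zigIncl₂Prefunctor m m').obj a' = a ∧ (zigIncl₂Prefunctor m m').obj b' = b) := by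
  rcases hom_side e with ⟨ha, hb⟩ | ⟨ha, hb⟩
  · exact .inl ⟨_, _, homLeft e ha hb, rfl, rfl⟩
  · exact .inr ⟨_, _, homRight e ha hb, zigIncl₂_toRight a ha, zigIncl₂_toRight b hb⟩

end ZigVert

section ZigGlue

variable {m m' : ZigzagWord}

theorem zigIncl₁_map_of {a b : ZigVert m} (e : a ⟶ b) :
    (zigIncl₁ m m').map ((Paths.of _).map e) =
      (Paths.of _).map ((zigIncl₁Prefunctor m m').map e) :=
  Paths.lift_toPath _ _

theorem zigIncl₂_map_of {a b : ZigVert m'} (e : a ⟶ b) :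
    (zigIncl₂ m m').map ((Paths.of _).map e) =
      (Paths.of _).map ((zigIncl₂Prefunctor m m').map e) :=
  Paths.lift_toPath _ _

theorem zigFunctor_ext {U U' : ZigCat (m ++ m') ⥤ R}
    (h₁ : zigIncl₁ m m' ⋙ U = zigIncl₁ m m' ⋙ U')
    (h₂ : zigIncl₂ m m' ⋙ U = zigIncl₂ m m' ⋙ U') : U = U' := by
  refine Paths.ext_functor_of_heq (funext fun v => ?_) fun a b e => ?_
  · rcases ZigVert.exists_zigIncl v with ⟨a, rfl⟩ | ⟨b, rfl⟩
    · exact Functor.congr_obj h₁ a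
    · exact Functor.congr_obj h₂ b
  · rcases ZigVert.hom_cases e with ⟨a, b, e', rfl, rfl⟩ | ⟨a, b, e', rfl, rfl⟩
    · rw [Subsingleton.elim e ((zigIncl₁Prefunctor m m').map e'), ← zigIncl₁_map_of]
      exact Functor.hcongr_hom h₁ _
    · rw [Subsingleton.elim e ((zigIncl₂Prefunctor m m').map e'), ← zigIncl₂_map_of]
      exact Functor.hcongr_hom h₂ _

variable (S : ZigCat m ⥤ R) (T : ZigCat m' ⥤ R)

def zigGlueObj (v : ZigVert (m ++ m')) : R :=
  if h : v.toNat ≤ m.length then S.obj ((Paths.of _).obj (v.toLeft h))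
  else T.obj ((Paths.of _).obj (v.toRight (le_of_not_ge h)))

theorem zigGlueObj_of_le (v : ZigVert (m ++ m')) (h : v.toNat ≤ m.length) :
    zigGlueObj S T v = S.obj ((Paths.of _).obj (v.toLeft h)) :=
  dif_pos h

variable {S T}

theorem zigGlueObj_of_ge
    (hST : S.obj ((Paths.of _).obj (zigTarget m)) = T.obj ((Paths.of _).obj (zigSource m')))
    (v : ZigVert (m ++ m')) (h : m.length ≤ v.toNat) :
    zigGlueObj S T v = T.obj ((Paths.of _).obj (v.toRight h)) := by
  by_cases h' : v.toNat ≤ m.length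
  · have hv : v.toNat = m.length := le_antisymm h' h
    rw [zigGlueObj_of_le S T v h', show v.toLeft h' = zigTarget m by ext; simp [hv],
      show v.toRight h = zigSource m' by ext; simp [hv]]
    exact hST
  · exact dif_neg h'

variable (hST : S.obj ((Paths.of _).obj (zigTarget m)) = T.obj ((Paths.of _).obj (zigSource m')))

def zigGluePrefunctor : ZigVert (m ++ m') ⥤q R where
  obj := zigGlueObj S T
  map {a b} e :=
    if h : a.toNat ≤ m.length ∧ b.toNat ≤ m.length then
      eqToHom (zigGlueObj_of_le S T a h.1) ≫
        S.map ((Paths.of _).map (ZigVert.homLeft e h.1 h.2)) ≫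
        eqToHom (zigGlueObj_of_le S T b h.2).symm
    else
      have h' := (ZigVert.hom_side e).resolve_left h
      eqToHom (zigGlueObj_of_ge hST a h'.1) ≫
        T.map ((Paths.of _).map (ZigVert.homRight e h'.1 h'.2)) ≫
        eqToHom (zigGlueObj_of_ge hST b h'.2).symm

def zigGlue : ZigCat (m ++ m') ⥤ R :=
  Paths.lift (zigGluePrefunctor hST)

theorem zigGlue_map_of {a b : ZigVert (m ++ m')} (e : a ⟶ b) :
    (zigGlue hST).map ((Paths.of _).map e) = (zigGluePrefunctor hST).map e :=
  Paths.lift_toPath _ _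

theorem zigGlue_map_of_heq_left {a b : ZigVert (m ++ m')} (e : a ⟶ b) (ha : a.toNat ≤ m.length)
    (hb : b.toNat ≤ m.length) :
    (zigGlue hST).map ((Paths.of _).map e) ≍
      S.map ((Paths.of _).map (ZigVert.homLeft e ha hb)) := by
  rw [zigGlue_map_of]
  dsimp only [zigGluePrefunctor]
  rw [dif_pos ⟨ha, hb⟩]
  exact (eqToHom_comp_heq _ _).trans (comp_eqToHom_heq _ _)

theorem zigGlue_map_of_heq_right {a b : ZigVert (m ++ m')} (e : a ⟶ b)
    (ha : m.length ≤ a.toNat) (hb : m.length ≤ b.toNat) :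
    (zigGlue hST).map ((Paths.of _).map e) ≍
      T.map ((Paths.of _).map (ZigVert.homRight e ha hb)) := by
  rw [zigGlue_map_of]
  dsimp only [zigGluePrefunctor]
  rw [dif_neg fun h => ZigVert.toNat_ne e (by omega)]
  exact (eqToHom_comp_heq _ _).trans (comp_eqToHom_heq _ _)

theorem zigIncl₁_comp_zigGlue : zigIncl₁ m m' ⋙ zigGlue hST = S := by
  refine Paths.ext_functor_of_heq (funext fun v => zigGlueObj_of_le S T _ v.toNat_le) ?_
  intro a b e
  rw [Functor.comp_map, zigIncl₁_map_of]
  exact (zigGlue_map_of_heq_left hST _ a.toNat_le b.toNat_le).trans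
    (Paths.map_of_map_heq S _ e rfl rfl)

theorem zigIncl₂_comp_zigGlue : zigIncl₂ m m' ⋙ zigGlue hST = T := by
  refine Paths.ext_functor_of_heq (funext fun v => ?_) fun a b e => ?_
  · change ZigVert m' at v
    exact (zigGlueObj_of_ge hST ((zigIncl₂Prefunctor m m').obj v) (by simp)).trans
      (congrArg (fun w => T.obj ((Paths.of _).obj w)) (ZigVert.toRight_zigIncl₂ v _))
  · rw [Functor.comp_map, zigIncl₂_map_of]
    exact (zigGlue_map_of_heq_right hST _ (by simp) (by simp)).trans
      (Paths.map_of_map_heq T _ e (ZigVert.toRight_zigIncl₂ a _) (ZigVert.toRight_zigIncl₂ b _))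

end ZigGlue

section ZigBoth

variable {W : MorphismProperty R} {x y : R} {m m' : ZigzagWord}

theorem FunS.ext {X Y : FunS m W x} (h : X.T = Y.T) : X = Y := by
  cases X; cases Y; subst h; rfl

theorem FunT.ext {X Y : FunT m' W y} (h : X.T = Y.T) : X = Y := by
  cases X; cases Y; subst h; rfl

theorem ZigBoth.ext {X Y : ZigBoth (m ++ m') W x y} (h : X.T = Y.T) : X = Y := by
  cases X; cases Y; subst h; rfl

variable [W.IsMultiplicative]

theorem FunS.eqToHom_comp_comp_eqToHom_η_app_heq {X X' Y Y' : FunS m W x} (φ : X ⟶ Y)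
    (hX : X' = X) (hY : Y = Y') (v : ZigCat m) :
    (eqToHom hX ≫ φ ≫ eqToHom hY).η.app v ≍ φ.η.app v := by
  subst hX hY
  simp

theorem FunT.eqToHom_comp_comp_eqToHom_η_app_heq {X X' Y Y' : FunT m' W y} (φ : X ⟶ Y)
    (hX : X' = X) (hY : Y = Y') (v : ZigCat m') :
    (eqToHom hX ≫ φ ≫ eqToHom hY).η.app v ≍ φ.η.app v := by
  subst hX hY
  simp

theorem WideSub.heq_iff_val_heq {a b a' b' : WideSub W} {f : a ⟶ b} {g : a' ⟶ b'}
    (ha : a = a') (hb : b = b') : f ≍ g ↔ f.1 ≍ g.1 := by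
  subst ha hb
  exact ⟨fun h => heq_of_eq (congrArg Subtype.val (eq_of_heq h)),
    fun h => heq_of_eq (Subtype.ext (eq_of_heq h))⟩

theorem restrictRight_comp_evalSource :
    restrictRight W x y m m' ⋙ evalSource m' W y = restrictLeft W x y m m' ⋙ evalTarget m W x := by
  have hobj (X : ZigBoth (m ++ m') W x y) :
      X.T.obj ((Paths.of _).obj ((zigIncl₂Prefunctor m m').obj (zigSource m'))) =
        X.T.obj ((Paths.of _).obj ((zigIncl₁Prefunctor m m').obj (zigTarget m))) :=
    congrArg (fun v => X.T.obj ((Paths.of _).obj v)) ZigVert.zigIncl₂_zigSource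
  refine Functor.hext hobj fun X Y f => (WideSub.heq_iff_val_heq (hobj X) (hobj Y)).2 ?_
  exact congr_arg_heq (fun v => f.η.app ((Paths.of _).obj v)) ZigVert.zigIncl₂_zigSource

theorem ZigBoth.ext_of_restrict {X Y : ZigBoth (m ++ m') W x y}
    (h₁ : (restrictLeft W x y m m').obj X = (restrictLeft W x y m m').obj Y)
    (h₂ : (restrictRight W x y m m').obj X = (restrictRight W x y m m').obj Y) : X = Y :=
  ZigBoth.ext (zigFunctor_ext (congrArg FunS.T h₁) (congrArg FunT.T h₂))

theorem ZigBoth.hom_ext_of_restrict {X Y : ZigBoth (m ++ m') W x y} {f g : X ⟶ Y}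
    (h₁ : (restrictLeft W x y m m').map f = (restrictLeft W x y m m').map g)
    (h₂ : (restrictRight W x y m m').map f = (restrictRight W x y m m').map g) : f = g := by
  refine ZigBoth.Hom.ext' (NatTrans.ext (funext fun v => ?_))
  rcases ZigVert.exists_zigIncl v with ⟨a, rfl⟩ | ⟨b, rfl⟩
  · exact NatTrans.congr_app (congrArg FunS.Hom.η h₁) a
  · exact NatTrans.congr_app (congrArg FunT.Hom.η h₂) b

theorem ZigBoth.functor_ext_of_restrict {P : Type*} [Category P]
    {M M' : P ⥤ ZigBoth (m ++ m') W x y}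
    (h₁ : M ⋙ restrictLeft W x y m m' = M' ⋙ restrictLeft W x y m m')
    (h₂ : M ⋙ restrictRight W x y m m' = M' ⋙ restrictRight W x y m m') : M = M' :=
  Functor.ext_of_comp_eq _ _ (fun _ _ => ZigBoth.ext_of_restrict)
    (fun _ _ => ZigBoth.hom_ext_of_restrict) h₁ h₂

def ZigBoth.glue (X : FunS m W x) (Y : FunT m' W y)
    (h : X.T.obj ((Paths.of _).obj (zigTarget m)) = Y.T.obj ((Paths.of _).obj (zigSource m'))) :
    ZigBoth (m ++ m') W x y where
  T := zigGlue h
  rel a b e he := by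
    rw [zigGlue_map_of]
    dsimp only [zigGluePrefunctor]
    split
    · exact W.eqToHom_comp_comp_eqToHom_mem (X.rel _ (ZigVert.isWArrow_homLeft he _ _)) _ _
    · exact W.eqToHom_comp_comp_eqToHom_mem (Y.rel _ (ZigVert.isWArrow_homRight he _ _)) _ _
  hx := by
    rw [← ZigVert.zigIncl₁_zigSource]
    exact (Functor.congr_obj (zigIncl₁_comp_zigGlue h) _).trans X.hx
  hy := by
    rw [← ZigVert.zigIncl₂_zigTarget]
    exact (Functor.congr_obj (zigIncl₂_comp_zigGlue h) _).trans Y.hy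

theorem restrictLeft_obj_glue (X : FunS m W x) (Y : FunT m' W y)
    (h : X.T.obj ((Paths.of _).obj (zigTarget m)) = Y.T.obj ((Paths.of _).obj (zigSource m'))) :
    (restrictLeft W x y m m').obj (ZigBoth.glue X Y h) = X :=
  FunS.ext (zigIncl₁_comp_zigGlue h)

theorem restrictRight_obj_glue (X : FunS m W x) (Y : FunT m' W y)
    (h : X.T.obj ((Paths.of _).obj (zigTarget m)) = Y.T.obj ((Paths.of _).obj (zigSource m'))) :
    (restrictRight W x y m m').obj (ZigBoth.glue X Y h) = Y :=
  FunT.ext (zigIncl₂_comp_zigGlue h)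

section GlueHom

variable {X Y : ZigBoth (m ++ m') W x y}
  (f : (restrictLeft W x y m m').obj X ⟶ (restrictLeft W x y m m').obj Y)
  (g : (restrictRight W x y m m').obj X ⟶ (restrictRight W x y m m').obj Y)

def ZigBoth.glueApp (v : ZigVert (m ++ m')) :
    X.T.obj ((Paths.of _).obj v) ⟶ Y.T.obj ((Paths.of _).obj v) :=
  if h : v.toNat ≤ m.length then f.η.app ((Paths.of _).obj (v.toLeft h))
  else
    have h' : m.length ≤ v.toNat := le_of_not_ge h
    have hv := congrArg (Paths.of _).obj (ZigVert.zigIncl₂_toRight v h')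
    eqToHom (congrArg X.T.obj hv.symm) ≫ g.η.app ((Paths.of _).obj (v.toRight h')) ≫
      eqToHom (congrArg Y.T.obj hv)

theorem ZigBoth.glueApp_zigIncl₁ (a : ZigVert m) :
    ZigBoth.glueApp f g ((zigIncl₁Prefunctor m m').obj a) = f.η.app ((Paths.of _).obj a) := by
  unfold ZigBoth.glueApp
  exact dif_pos a.toNat_le

variable {f g}

theorem ZigBoth.glueApp_zigIncl₂
    (hfg : f.η.app ((Paths.of _).obj (zigTarget m)) ≍ g.η.app ((Paths.of _).obj (zigSource m')))
    (b : ZigVert m') :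
    ZigBoth.glueApp f g ((zigIncl₂Prefunctor m m').obj b) = g.η.app ((Paths.of _).obj b) := by
  unfold ZigBoth.glueApp
  by_cases h : ((zigIncl₂Prefunctor m m').obj b).toNat ≤ m.length
  · have hb : b.toNat = 0 := by
      rw [ZigVert.toNat_zigIncl₂] at h
      omega
    refine (dif_pos h).trans (eq_of_heq ((congr_arg_heq (fun v => f.η.app ((Paths.of _).obj v))
      (show _ = zigTarget m by ext; simpa)).trans (hfg.trans ?_)))
    exact congr_arg_heq (fun v => g.η.app ((Paths.of _).obj v))
      (show zigSource m' = b by ext; simp [hb])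
  · exact (dif_neg h).trans (eq_of_heq ((eqToHom_comp_heq _ _).trans
      ((comp_eqToHom_heq _ _).trans (congr_arg_heq (fun v => g.η.app ((Paths.of _).obj v))
        (ZigVert.toRight_zigIncl₂ b _)))))

variable
  (hfg : f.η.app ((Paths.of _).obj (zigTarget m)) ≍ g.η.app ((Paths.of _).obj (zigSource m')))

def ZigBoth.glueHom : X ⟶ Y where
  η := Paths.liftNatTrans (ZigBoth.glueApp f g) fun {a b} e => by
    rcases ZigVert.hom_cases e with ⟨a, b, e', rfl, rfl⟩ | ⟨a, b, e', rfl, rfl⟩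
    · rw [Subsingleton.elim e ((zigIncl₁Prefunctor m m').map e'), ZigBoth.glueApp_zigIncl₁,
        ZigBoth.glueApp_zigIncl₁]
      have := f.η.naturality ((Paths.of _).map e')
      dsimp only [restrictLeft, Functor.comp_map] at this
      rwa [zigIncl₁_map_of] at this
    · rw [Subsingleton.elim e ((zigIncl₂Prefunctor m m').map e'), ZigBoth.glueApp_zigIncl₂ hfg,
        ZigBoth.glueApp_zigIncl₂ hfg]
      have := g.η.naturality ((Paths.of _).map e')
      dsimp only [restrictRight, Functor.comp_map] at this
      rwa [zigIncl₂_map_of] at this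
  mem v := by
    change W (ZigBoth.glueApp f g v)
    unfold ZigBoth.glueApp
    by_cases h : v.toNat ≤ m.length
    · exact (dif_pos h).symm ▸ f.mem _
    · exact (dif_neg h).symm ▸ W.eqToHom_comp_comp_eqToHom_mem (g.mem _) _ _
  h₀ := app_eq_eqToHom_of _ (congrArg (Paths.of _).obj ZigVert.zigIncl₁_zigSource) _
    ((ZigBoth.glueApp_zigIncl₁ f g _).trans f.h₀) _
  hₚ := app_eq_eqToHom_of _ (congrArg (Paths.of _).obj ZigVert.zigIncl₂_zigTarget) _
    ((ZigBoth.glueApp_zigIncl₂ hfg _).trans g.hₚ) _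

variable {hfg}

theorem restrictLeft_map_glueHom : (restrictLeft W x y m m').map (ZigBoth.glueHom hfg) = f :=
  FunS.Hom.ext' (NatTrans.ext (funext fun a => ZigBoth.glueApp_zigIncl₁ f g a))

theorem restrictRight_map_glueHom : (restrictRight W x y m m').map (ZigBoth.glueHom hfg) = g :=
  FunT.Hom.ext' (NatTrans.ext (funext fun b => ZigBoth.glueApp_zigIncl₂ hfg b))

end GlueHom

section Lift

variable {P : Type*} [Category P] (F : P ⥤ FunT m' W y) (G : P ⥤ FunS m W x)

theorem ZigBoth.lift_junction_heq (hc : F ⋙ evalSource m' W y = G ⋙ evalTarget m W x)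
    {c c' : P} (φ : c ⟶ c') {X X' : FunS m W x} {Y Y' : FunT m' W y}
    (hX : X = G.obj c) (hX' : G.obj c' = X') (hY : Y = F.obj c) (hY' : F.obj c' = Y') :
    (eqToHom hX ≫ G.map φ ≫ eqToHom hX').η.app ((Paths.of _).obj (zigTarget m)) ≍
      (eqToHom hY ≫ F.map φ ≫ eqToHom hY').η.app ((Paths.of _).obj (zigSource m')) :=
  (FunS.eqToHom_comp_comp_eqToHom_η_app_heq _ _ _ _).trans
    (((WideSub.heq_iff_val_heq (Functor.congr_obj hc c).symm (Functor.congr_obj hc c').symm).1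
      (Functor.hcongr_hom hc φ).symm).trans
    (FunT.eqToHom_comp_comp_eqToHom_η_app_heq _ _ _ _).symm)

variable (hc : F ⋙ evalSource m' W y = G ⋙ evalTarget m W x)

def ZigBoth.lift : P ⥤ ZigBoth (m ++ m') W x y where
  obj c := ZigBoth.glue (G.obj c) (F.obj c) (Functor.congr_obj hc c).symm
  map φ := ZigBoth.glueHom (ZigBoth.lift_junction_heq F G hc φ (restrictLeft_obj_glue _ _ _)
    (restrictLeft_obj_glue _ _ _).symm (restrictRight_obj_glue _ _ _)
    (restrictRight_obj_glue _ _ _).symm)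
  map_id c := ZigBoth.hom_ext_of_restrict (by simp [restrictLeft_map_glueHom])
    (by simp [restrictRight_map_glueHom])
  map_comp φ ψ := ZigBoth.hom_ext_of_restrict (by simp [restrictLeft_map_glueHom])
    (by simp [restrictRight_map_glueHom])

theorem ZigBoth.lift_comp_restrictLeft : ZigBoth.lift F G hc ⋙ restrictLeft W x y m m' = G :=
  CategoryTheory.Functor.ext (fun _ => restrictLeft_obj_glue _ _ _) fun _ _ _ =>
    restrictLeft_map_glueHom (hfg := ZigBoth.lift_junction_heq F G hc _ _ _ _ _)

theorem ZigBoth.lift_comp_restrictRight : ZigBoth.lift F G hc ⋙ restrictRight W x y m m' = F :=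
  CategoryTheory.Functor.ext (fun _ => restrictRight_obj_glue _ _ _) fun _ _ _ =>
    restrictRight_map_glueHom (hfg := ZigBoth.lift_junction_heq F G hc _ _ _ _ _)

end Lift

end ZigBoth

/-- The category of zigzags of concatenated type `[m; m']` from `x` to `y` is the fiber
product, over the wide subcategory `𝒲`, of the two half-pointed zigzag categories: the
square with top-left corner `(m ++ m')(x, y)`, top map restriction along `ι'`, left map
restriction along `ι`, right map evaluation at the vertex `0` of `Z(m')`, and bottom map
evaluation at the vertex `p` of `Z(m)`, commutes and is a pullback square in `Cat`. -/
theorem zigzag_concat_isPullback {R : Type u} [Category.{u} R]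
    (W : MorphismProperty R) [W.IsMultiplicative] (x y : R) (m m' : ZigzagWord) :
    IsPullback
      (P := Cat.of (ZigBoth (m ++ m') W x y)) (X := Cat.of (FunT m' W y))
      (Y := Cat.of (FunS m W x)) (Z := Cat.of (WideSub W))
      (restrictRight W x y m m').toCatHom (restrictLeft W x y m m').toCatHom
      (evalSource m' W y).toCatHom (evalTarget m W x).toCatHom := by
  refine IsPullback.of_isLimit' ⟨congrArg Functor.toCatHom restrictRight_comp_evalSource⟩ ?_
  have hc (s : Limits.PullbackCone (evalSource m' W y).toCatHom (evalTarget m W x).toCatHom) :=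
    congrArg Cat.Hom.toFunctor s.condition
  refine Limits.PullbackCone.IsLimit.mk _
    (fun s => (ZigBoth.lift s.fst.toFunctor s.snd.toFunctor (hc s)).toCatHom)
    (fun s => Cat.ext (ZigBoth.lift_comp_restrictRight _ _ (hc s)))
    (fun s => Cat.ext (ZigBoth.lift_comp_restrictLeft _ _ (hc s)))
    (fun s M hM₁ hM₂ => Cat.ext (ZigBoth.functor_ext_of_restrict ?_ ?_))
  · exact (congrArg Cat.Hom.toFunctor hM₂).trans (ZigBoth.lift_comp_restrictLeft _ _ (hc s)).symm
  · exact (congrArg Cat.Hom.toFunctor hM₁).trans (ZigBoth.lift_comp_restrictRight _ _ (hc s)).symm
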